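/- arXiv:2005.02073 — 4 statements merged into one kernel-verified Lean document; each statement's English description precedes it below -/
import Mathlib

section
/- Let y_0, y_1, ..., y_m be integers defined by y_0 = S_0 and y_j = ⌊y_{j-1}/b⌋ + S_j for j ≥ 1, where b > 1 and S_j = Σ_i A_{i,j} v_i with 0 ≤ A_{i,j} < b and v_i ≥ 0. Then Σ_{j=0}^m b^j S_j > b^{m+1} - 1 if and only if y_m ≥ b. -/
private lemma key_sum (b : ℕ) (hb : 1 < b) (S y : ℕ → ℕ) (hy0 : y 0 = S 0)
    (hy : ∀ j, y (j + 1) = y j / b + S (j + 1)) :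
    ∀ m, ∑ j ∈ Finset.range (m + 1), b ^ j * S j
      = b ^ m * y m + ∑ j ∈ Finset.range m, b ^ j * (y j % b) := by
  intro m
  induction m with
  | zero => simp [hy0]
  | succ m ih =>
      rw [Finset.sum_range_succ, ih, Finset.sum_range_succ, hy m]
      have hdm : b ^ m * y m = b ^ (m + 1) * (y m / b) + b ^ m * (y m % b) := by
        conv_lhs => rw [← Nat.div_add_mod (y m) b]
        ring
      rw [hdm]
      ring

private lemma rem_bound (b : ℕ) (hb : 1 < b) (y : ℕ → ℕ) :
    ∀ m, ∑ j ∈ Finset.range m, b ^ j * (y j % b) + 1 ≤ b ^ m := by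
  intro m
  induction m with
  | zero => simp
  | succ m ih =>
      rw [Finset.sum_range_succ, pow_succ]
      have h1 : y m % b ≤ b - 1 := by
        have := Nat.mod_lt (y m) (by omega : 0 < b); omega
      have h2 : b ^ m * (y m % b) ≤ b ^ m * (b - 1) :=
        Nat.mul_le_mul_left _ h1
      have h3 : b ^ m * (b - 1) + b ^ m = b ^ m * b := by
        have : b - 1 + 1 = b := by omega
        calc b ^ m * (b - 1) + b ^ m = b ^ m * (b - 1 + 1) := by ring
          _ = b ^ m * b := by rw [this]
      omega

/-- The layered carry recursion: the total weighted sum exceeds b^(m+1) - 1 iff y_m ≥ b. -/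
theorem stmt_8 (b m n : ℕ) (hb : 1 < b)
    (A : Fin n → ℕ → ℕ) (v : Fin n → ℕ) (hA : ∀ i j, A i j < b)
    (S : ℕ → ℕ) (hS : ∀ j, S j = ∑ i, A i j * v i)
    (y : ℕ → ℕ) (hy0 : y 0 = S 0) (hy : ∀ j, y (j + 1) = y j / b + S (j + 1)) :
    (b ^ (m + 1) - 1 < ∑ j ∈ Finset.range (m + 1), b ^ j * S j) ↔ b ≤ y m := by
  rw [key_sum b hb S y hy0 hy m]
  have hR := rem_bound b hb y m
  have hbm : 0 < b ^ m := Nat.pow_pos (by omega)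
  have hpow : b ^ (m + 1) = b ^ m * b := pow_succ b m
  constructor
  · intro h
    by_contra hlt
    push_neg at hlt
    have : b ^ m * y m ≤ b ^ m * (b - 1) := Nat.mul_le_mul_left _ (by omega)
    have h3 : b ^ m * (b - 1) + b ^ m = b ^ m * b := by
      have hb1 : b - 1 + 1 = b := by omega
      calc b ^ m * (b - 1) + b ^ m = b ^ m * (b - 1 + 1) := by ring
        _ = b ^ m * b := by rw [hb1]
    omega
  · intro h
    calc b ^ (m + 1) - 1 < b ^ (m + 1) :=
          Nat.sub_lt (pow_pos (by omega) _) one_pos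
      _ ≤ b ^ m * y m := by rw [hpow]; exact Nat.mul_le_mul_left _ h
      _ ≤ _ := Nat.le_add_right _ _
end

section
/- Let C be a constraint on variables x_{1,1},...,x_{n,m_n} that is monotone (antitone in each argument: if it holds for an assignment, it holds after decreasing any variable), and let C'(x_1,...,x_n) = C(x_1,...,x_1, x_2,...,x_2, ..., x_n,...,x_n) be obtained by identifying duplicated variables. If P is a consistent propagator for C (P detects failure on a partial lower-bound assignment {x_{i,j} ≥ v_{i,j}} iff it is inconsistent with C), then P applied to the duplicated assignment {x_{i,j} ≥ v_i for all j} detects failure iff {x_i ≥ v_i} is inconsistent with C'. In particular: a lower-bound assignment {x_i ≥ v_i} is inconsistent with C' iff the duplicated lower-bound assignment is inconsistent with C. -/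
/-- For a monotone constraint C, the lower-bound assignment {x_i ≥ v_i} is inconsistent
with the identified constraint C'(x_1,...,x_n) = C(x_1,...,x_1,...,x_n,...,x_n)
iff the duplicated lower-bound assignment {x_{i,j} ≥ v_i} is inconsistent with C. -/
theorem stmt_10 (n : ℕ) (m : Fin n → ℕ)
    (C : ((i : Fin n) → Fin (m i) → ℕ) → Prop)
    (hmono : ∀ w w' : (i : Fin n) → Fin (m i) → ℕ,
      (∀ i j, w' i j ≤ w i j) → C w → C w')
    (v : Fin n → ℕ) :
    (¬ ∃ x : Fin n → ℕ, (∀ i, v i ≤ x i) ∧ C (fun i _ => x i)) ↔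
      (¬ ∃ w : (i : Fin n) → Fin (m i) → ℕ, (∀ i j, v i ≤ w i j) ∧ C w) := by
  apply not_congr
  constructor
  · rintro ⟨x, hx, hC⟩
    exact ⟨fun i _ => x i, fun i j => hx i, hC⟩
  · rintro ⟨w, hw, hC⟩
    exact ⟨v, fun i => le_refl _, hmono w _ (fun i j => hw i j) hC⟩
end

section
/- Let y_0,...,y_m be defined by y_0 = S_0 and y_j = ⌊y_{j-1}/b⌋ + S_j where S_j = Σ_i A_{i,j} v_i, 0 ≤ A_{i,j} < b, b > 1, and all v_i ≥ 0. Then for every j, Σ_{k=0}^{j} b^k S_k = b^j y_j + r_j for some 0 ≤ r_j ≤ b^j - 1; in particular b^j y_j ≤ Σ_{k=0}^{j} b^k S_k ≤ b^j y_j + b^j - 1. -/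
/-- The layered partial-sum recursion: Σ_{k=0}^{j} b^k S_k = b^j y_j + r_j with
0 ≤ r_j ≤ b^j - 1. -/
theorem stmt_17 (b n : ℕ) (hb : 1 < b)
    (A : Fin n → ℕ → ℕ) (v : Fin n → ℕ) (hA : ∀ i j, A i j < b)
    (S : ℕ → ℕ) (hS : ∀ j, S j = ∑ i, A i j * v i)
    (y : ℕ → ℕ) (hy0 : y 0 = S 0) (hy : ∀ j, y (j + 1) = y j / b + S (j + 1)) :
    ∀ j, ∃ r, r ≤ b ^ j - 1 ∧
      ∑ k ∈ Finset.range (j + 1), b ^ k * S k = b ^ j * y j + r := by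
  have hbpos : 0 < b := by omega
  intro j
  induction j with
  | zero => exact ⟨0, by simp, by simp [hy0]⟩
  | succ j ih =>
    obtain ⟨r, hr, hsum⟩ := ih
    refine ⟨b ^ j * (y j % b) + r, ?_, ?_⟩
    · have h1 : y j % b ≤ b - 1 := by
        have := Nat.mod_lt (y j) hbpos; omega
      have h2 : b ^ j * (y j % b) ≤ b ^ j * (b - 1) :=
        Nat.mul_le_mul_left _ h1
      have h3 : b ^ j * (b - 1) + (b ^ j - 1) = b ^ (j + 1) - 1 := by
        have hp : 1 ≤ b ^ j := Nat.one_le_pow _ _ hbpos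
        rw [pow_succ]
        have : b ^ j ≤ b ^ j * b := Nat.le_mul_of_pos_right _ hbpos
        rw [Nat.mul_sub_one]; omega
      omega
    · rw [Finset.sum_range_succ, hsum, hy j]
      have hd : y j = b * (y j / b) + y j % b := (Nat.div_add_mod (y j) b).symm
      calc b ^ j * y j + r + b ^ (j + 1) * S (j + 1)
          = b ^ (j + 1) * (y j / b + S (j + 1)) + (b ^ j * (y j % b) + r) := by
            conv_lhs => rw [hd]
            rw [pow_succ]; ring
end

section
/- Let M be the MDD (acting as a function) of the constraint a_i x_i + ... + a_n x_n ≤ α rooted at a node ν whose children ν_0, ..., ν_{d_i} represent a_{i+1} x_{i+1} + ... + a_n x_n ≤ β for exactly β ∈ [β_r, γ_r] (the interval of ν_r), for r = 0..d_i. Then ν represents a_i x_i + ... + a_n x_n ≤ α exactly for α ∈ [β, γ] where β = max_r (β_r + r·a_i) and γ = min_r (γ_r + r·a_i). Concretely: for integers α, the predicate 'for all (v_i,...,v_n) with v_j ∈ [0,d_j]: Σ_{j≥i} a_j v_j ≤ α ⟺ Σ_{j>i} a_j v_j ≤ α - a_i v_i decided by child ν_{v_i}' holds iff β ≤ α ≤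 γ. -/
/-- Interval of an MDD node: if each child r decides the tail constraint
Σ_{j>i} a_j x_j ≤ β exactly for β in its interval [βc r, γc r], then the node
decides Σ_{j≥i} a_j x_j ≤ α exactly for α in
[max_r (βc r + r·a_i), min_r (γc r + r·a_i)]. -/
theorem stmt_18 (i n : ℕ) (hin : i ≤ n) (a : ℕ → ℤ)
    (ha : ∀ j ∈ Finset.Icc i n, 0 < a j)
    (d : ℕ → ℤ) (hd : ∀ j, 0 ≤ d j)
    (βc γc : ℤ → ℤ)
    (hchild : ∀ r : ℤ, 0 ≤ r → r ≤ d i → ∀ β : ℤ,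
      (βc r ≤ β ∧ β ≤ γc r) ↔
        (∀ v : ℕ → ℤ, (∀ j ∈ Finset.Icc (i + 1) n, 0 ≤ v j ∧ v j ≤ d j) →
          ((∑ j ∈ Finset.Icc (i + 1) n, a j * v j) ≤ β ↔
            (∑ j ∈ Finset.Icc (i + 1) n, a j * v j) ≤ βc r))) :
    ∀ α : ℤ,
      ((∀ r : ℤ, 0 ≤ r → r ≤ d i → βc r + r * a i ≤ α) ∧
        (∀ r : ℤ, 0 ≤ r → r ≤ d i → α ≤ γc r + r * a i)) ↔
      (∀ v : ℕ → ℤ, (∀ j ∈ Finset.Icc i n, 0 ≤ v j ∧ v j ≤ d j) →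
        ((∑ j ∈ Finset.Icc i n, a j * v j) ≤ α ↔
          (∑ j ∈ Finset.Icc (i + 1) n, a j * v j) ≤ βc (v i))) := by
  have hIcc : Finset.Icc i n = insert i (Finset.Icc (i + 1) n) := by
    ext j; simp [Finset.mem_Icc, Finset.mem_insert]; omega
  have hsplit : ∀ v : ℕ → ℤ, (∑ j ∈ Finset.Icc i n, a j * v j)
      = a i * v i + ∑ j ∈ Finset.Icc (i + 1) n, a j * v j := by
    intro v
    rw [hIcc, Finset.sum_insert (by simp)]
  intro α
  constructor
  · rintro ⟨h1, h2⟩ v hv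
    have hvi := hv i (by simp [Finset.mem_Icc, hin])
    have hβ := (hchild (v i) hvi.1 hvi.2 (α - v i * a i)).mp
      ⟨by linarith [h1 (v i) hvi.1 hvi.2], by linarith [h2 (v i) hvi.1 hvi.2]⟩
    have := hβ v (fun j hj => hv j (by rw [hIcc]; exact Finset.mem_insert_of_mem hj))
    rw [hsplit v]
    constructor
    · intro h; exact this.mp (by linarith)
    · intro h; linarith [this.mpr h]
  · intro H
    have key : ∀ r : ℤ, 0 ≤ r → r ≤ d i → βc r ≤ α - r * a i ∧ α - r * a i ≤ γc r := by
      intro r hr0 hrd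
      apply (hchild r hr0 hrd (α - r * a i)).mpr
      intro w hw
      set v : ℕ → ℤ := fun j => if j = i then r else w j with hvdef
      have hsum : (∑ j ∈ Finset.Icc (i + 1) n, a j * v j)
          = ∑ j ∈ Finset.Icc (i + 1) n, a j * w j := by
        apply Finset.sum_congr rfl
        intro j hj
        have : j ≠ i := by simp [Finset.mem_Icc] at hj; omega
        simp [hvdef, this]
      have hvb : ∀ j ∈ Finset.Icc i n, 0 ≤ v j ∧ v j ≤ d j := by
        intro j hj
        by_cases hji : j = i
        · subst hji; simp [hvdef, hr0, hrd]
        · have : j ∈ Finset.Icc (i + 1) n := by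
            simp [Finset.mem_Icc] at hj ⊢; omega
          simpa [hvdef, hji] using hw j this
      have := H v hvb
      rw [hsplit v, hsum] at this
      have hvi : v i = r := by simp [hvdef]
      rw [hvi] at this
      constructor
      · intro h; exact this.mp (by linarith)
      · intro h; linarith [this.mpr h]
    constructor
    · intro r hr0 hrd; linarith [(key r hr0 hrd).1]
    · intro r hr0 hrd; linarith [(key r hr0 hrd).2]
end
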